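/- Let F(z,w) = ∑_{n=0}^∞ fₙ(z)wⁿ be a Hartogs series on D = D₁ × D₂ satisfying condition (C1) and satisfying condition (C2) with a monic polynomial relation: Φ₀ ≡ 1 and t ≥ 2. Let Δ be a holomorphic function on D, not identically zero, such that for every (z,w) ∈ D, Δ(z,w) = 0 if and only if the complex polynomial X ↦ ∑_{j=0}^t Φⱼ(z,w) X^{t−j} has a repeated complex root. Let E_Δ := {β ∈ D₁ : Δ(β,w) = 0 for all w ∈ D₂}. Then F converges and is holomorphic on (D₁ \ E_Δ) × D₂. -/

import Mathlib

open Filter Topology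
open scoped ENNReal

noncomputable section

/-- The open disk `{w : ℂ | |w| < R}` of radius `R ∈ (0, ∞]` centered at the origin. -/
def disk (R : ℝ≥0∞) : Set ℂ := {w : ℂ | (‖w‖₊ : ℝ≥0∞) < R}

/-- The Hartogs series `∑ fₙ(z) wⁿ` converges at every point of `V` and
its sum function is holomorphic on `V`. -/
def HolSumOn {N : ℕ} (f : ℕ → (Fin N → ℂ) → ℂ) (V : Set ((Fin N → ℂ) × ℂ)) : Prop :=
  ∃ G : (Fin N → ℂ) × ℂ → ℂ, DifferentiableOn ℂ G V ∧
    ∀ p ∈ V, Tendsto (fun m => ∑ n ∈ Finset.range m, f n p.1 * p.2 ^ n) atTop (𝓝 (G p))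

/-- The formal identity `∑_{j=0}^{t} Φⱼ · F^{t-j} = 0` in `O(D₁)[[w]]`, expressed through the
coefficient families: every `w`-coefficient of the formal power series vanishes identically
on `D₁`. -/
def FormalAlgRel {N : ℕ} (f : ℕ → (Fin N → ℂ) → ℂ) (g : ℕ → ℕ → (Fin N → ℂ) → ℂ)
    (t : ℕ) (D₁ : Set (Fin N → ℂ)) : Prop :=
  ∀ m : ℕ, ∀ z ∈ D₁,
    (PowerSeries.coeff (R := (Fin N → ℂ) → ℂ) m
      (∑ j ∈ Finset.range (t + 1),
        PowerSeries.mk (g j) * (PowerSeries.mk f) ^ (t - j))) z = 0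

/-- Condition (C1). -/
def CondC1 {N : ℕ} (f : ℕ → (Fin N → ℂ) → ℂ) (D₁ : Set (Fin N → ℂ)) (R : ℝ≥0∞) : Prop :=
  ∃ S : Set (Fin N → ℂ), S ⊆ D₁ ∧ D₁ ⊆ closure S ∧
    ∀ α ∈ S, ∀ w ∈ disk R,
      ∃ l : ℂ, Tendsto (fun m => ∑ n ∈ Finset.range m, f n α * w ^ n) atTop (𝓝 l)

/-- Condition (C2). -/
def CondC2 {N : ℕ} (f : ℕ → (Fin N → ℂ) → ℂ) (D₁ : Set (Fin N → ℂ)) (R : ℝ≥0∞) : Prop :=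
  ∃ (t : ℕ) (Φ : ℕ → (Fin N → ℂ) × ℂ → ℂ) (g : ℕ → ℕ → (Fin N → ℂ) → ℂ),
    1 ≤ t ∧
    (∀ j, j ≤ t → DifferentiableOn ℂ (Φ j) (D₁ ×ˢ disk R)) ∧
    (∀ j n, j ≤ t → DifferentiableOn ℂ (g j n) D₁) ∧
    (∀ j, j ≤ t → ∀ p ∈ D₁ ×ˢ disk R,
      Tendsto (fun m => ∑ n ∈ Finset.range m, g j n p.1 * p.2 ^ n) atTop (𝓝 (Φ j p))) ∧
    (∃ p ∈ D₁ ×ˢ disk R, Φ 0 p ≠ 0) ∧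
    FormalAlgRel f g t D₁

/-!
For `α` in the dense set `S` of (C1), `F(α, ·)` is a genuine power series on `D₂`, and evaluating
the formal relation at `α` shows that `F(α, w)` is a root of the monic polynomial
`X ↦ ∑ Φⱼ(α, w) X^{t-j}`. Hence `|F(α, w)| ≤ 1 + ∑_{j ≥ 1} |Φⱼ(α, w)|`, which is locally bounded.
Cauchy estimates turn this into bounds `|fₙ(α)| ≤ M / rⁿ` for `α ∈ S` near any point of `D₁`
and any `r` below the radius of `D₂`; by density and continuity they hold for all `α` near that
point. Such bounds make the Hartogs series converge locally uniformly on all of `D₁ × D₂`, so its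
sum is holomorphic there.
-/

open Metric FormalMultilinearSeries

theorem norm_le_one_add_sum_norm_of_sum_mul_pow_eq_zero {𝕜 : Type*} [NormedField 𝕜] {t : ℕ}
    {a : ℕ → 𝕜} {x : 𝕜} (ha0 : a 0 = 1)
    (h : ∑ j ∈ Finset.range (t + 1), a j * x ^ (t - j) = 0) :
    ‖x‖ ≤ 1 + ∑ j ∈ Finset.Ico 1 (t + 1), ‖a j‖ := by
  set s := ∑ j ∈ Finset.Ico 1 (t + 1), ‖a j‖
  have hs : 0 ≤ s := Finset.sum_nonneg fun j _ => norm_nonneg _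
  rcases le_or_gt ‖x‖ 1 with hx | hx
  · linarith
  obtain _ | t := t
  · simp [ha0] at h
  have hlead : x ^ (t + 1) = -∑ j ∈ Finset.Ico 1 (t + 2), a j * x ^ (t + 1 - j) := by
    rw [Finset.range_eq_Ico, Finset.sum_eq_sum_Ico_succ_bot (by omega), ha0] at h
    simpa [pow_succ] using eq_neg_of_add_eq_zero_left h
  have hpow : ‖x‖ ^ (t + 1) ≤ s * ‖x‖ ^ t := calc
    ‖x‖ ^ (t + 1) ≤ ∑ j ∈ Finset.Ico 1 (t + 2), ‖a j‖ * ‖x‖ ^ (t + 1 - j) := by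
      rw [← norm_pow, hlead, norm_neg]
      refine (norm_sum_le _ _).trans_eq (Finset.sum_congr rfl fun j _ => ?_)
      rw [norm_mul, norm_pow]
    _ ≤ s * ‖x‖ ^ t := by
      rw [Finset.sum_mul]
      gcongr with j hj
      · exact hx.le
      · have := (Finset.mem_Ico.1 hj).1; omega
  have : ‖x‖ ≤ s := le_of_mul_le_mul_right (by rwa [pow_succ'] at hpow) (by positivity)
  linarith

theorem differentiableOn_tsum_of_norm_le {ι E F : Type*} [NormedAddCommGroup E] [NormedSpace ℂ E]
    [NormedAddCommGroup F] [NormedSpace ℂ F] [CompleteSpace F] {f : ι → E → F} {u : ι → ℝ}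
    {U : Set E} (hu : Summable u) (hU : IsOpen U) (hf : ∀ i, DifferentiableOn ℂ (f i) U)
    (hle : ∀ i, ∀ x ∈ U, ‖f i x‖ ≤ u i) :
    DifferentiableOn ℂ (fun x => ∑' i, f i x) U := by
  intro x hx
  obtain ⟨δ, hδ, hball⟩ := Metric.isOpen_iff.1 hU x hx
  have hδ2 : 0 < δ / 2 := half_pos hδ
  have hsub : ∀ y ∈ ball x (δ / 2), ball y (δ / 2) ⊆ U := fun y hy =>
    (ball_subset_ball' (by linarith [mem_ball.1 hy])).trans hball
  -- Schwarz lemma: a map of `ball y ρ` into a ball of radius `2 u i` has derivative `≤ 2 u i / ρ`.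
  have hderiv : ∀ i, ∀ y ∈ ball x (δ / 2), ‖fderiv ℂ (f i) y‖ ≤ 2 * u i / (δ / 2) := by
    intro i y hy
    refine Complex.norm_fderiv_le_div_of_mapsTo_ball ((hf i).mono (hsub y hy))
      (fun y' hy' => ?_) hδ2
    rw [mem_closedBall, dist_eq_norm]
    linarith [norm_sub_le (f i y') (f i y), hle i y' (hsub y hy hy'),
      hle i y (hsub y hy (mem_ball_self hδ2))]
  have hdiff : ∀ i, ∀ y ∈ ball x (δ / 2), HasFDerivAt (f i) (fderiv ℂ (f i) y) y := fun i y hy =>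
    ((hf i).differentiableAt (hU.mem_nhds (hsub y hy (mem_ball_self hδ2)))).hasFDerivAt
  exact (hasFDerivAt_tsum_of_isPreconnected (hu.mul_left (2 / (δ / 2))) isOpen_ball
    (convex_ball x _).isPreconnected hdiff (fun i y hy => (hderiv i y hy).trans_eq (by ring))
    (mem_ball_self hδ2) (hu.of_norm_bounded (hle · x hx)) (mem_ball_self hδ2))
    |>.differentiableAt.differentiableWithinAt

namespace PowerSeries

variable {R : Type*} [NormedCommRing R]

def HasAbsSumAt (A : PowerSeries R) (w s : R) : Prop :=
  Summable (fun n => ‖coeff n A * w ^ n‖) ∧ HasSum (fun n => coeff n A * w ^ n) s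

namespace HasAbsSumAt

variable {A B : PowerSeries R} {w a b : R}

theorem zero : HasAbsSumAt (0 : PowerSeries R) w 0 := by
  simp only [HasAbsSumAt, map_zero, zero_mul, norm_zero]
  exact ⟨summable_zero, hasSum_zero⟩

theorem one : HasAbsSumAt (1 : PowerSeries R) w 1 := by
  have h : (fun n => coeff n (1 : PowerSeries R) * w ^ n) = Pi.single 0 1 := by
    ext n
    rcases eq_or_ne n 0 with rfl | hn
    · simp
    · simp [coeff_one, hn]
  rw [HasAbsSumAt, h]
  refine ⟨summable_of_ne_finset_zero (s := {0}) fun n hn => ?_, hasSum_pi_single 0 1⟩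
  simp [Finset.mem_singleton.not.1 hn]

theorem add (hA : HasAbsSumAt A w a) (hB : HasAbsSumAt B w b) :
    HasAbsSumAt (A + B) w (a + b) := by
  simp only [HasAbsSumAt, map_add, add_mul]
  exact ⟨.of_nonneg_of_le (fun _ => norm_nonneg _) (fun _ => norm_add_le _ _) (hA.1.add hB.1),
    hA.2.add hB.2⟩

theorem mul [CompleteSpace R] (hA : HasAbsSumAt A w a) (hB : HasAbsSumAt B w b) :
    HasAbsSumAt (A * B) w (a * b) := by
  have hcoeff : ∀ n, coeff n (A * B) * w ^ n = ∑ kl ∈ Finset.HasAntidiagonal.antidiagonal n,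
      (coeff kl.1 A * w ^ kl.1) * (coeff kl.2 B * w ^ kl.2) := by
    intro n
    rw [coeff_mul, Finset.sum_mul]
    refine Finset.sum_congr rfl fun kl hkl => ?_
    rw [← Finset.HasAntidiagonal.mem_antidiagonal.1 hkl, pow_add]
    ring
  have hsum := summable_norm_sum_mul_antidiagonal_of_summable_norm hA.1 hB.1
  simp only [HasAbsSumAt, hcoeff]
  refine ⟨hsum, ?_⟩
  rw [← hA.2.tsum_eq, ← hB.2.tsum_eq,
    tsum_mul_tsum_eq_tsum_sum_antidiagonal_of_summable_norm hA.1 hB.1]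
  exact hsum.of_norm.hasSum

theorem pow [CompleteSpace R] (hA : HasAbsSumAt A w a) (k : ℕ) :
    HasAbsSumAt (A ^ k) w (a ^ k) := by
  induction k with
  | zero => simpa using one
  | succ k ih => simpa only [pow_succ] using ih.mul hA

theorem sum {ι : Type*} (s : Finset ι) {A : ι → PowerSeries R} {a : ι → R}
    (h : ∀ i ∈ s, HasAbsSumAt (A i) w (a i)) :
    HasAbsSumAt (∑ i ∈ s, A i) w (∑ i ∈ s, a i) := by
  classical
  induction s using Finset.induction_on with
  | empty => simpa using zero
  | insert i s hi ih =>
    rw [Finset.sum_insert hi, Finset.sum_insert hi]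
    exact (h i (s.mem_insert_self i)).add (ih fun j hj => h j (Finset.mem_insert_of_mem hj))

theorem eq_zero_of_zero (h : HasAbsSumAt (0 : PowerSeries R) w a) : a = 0 :=
  h.2.unique (by simp [hasSum_zero])

end HasAbsSumAt

end PowerSeries

theorem disk_eq_eball (R : ℝ≥0∞) : disk R = eball (0 : ℂ) R := by
  ext w
  rw [disk, Set.mem_ofPred_eq, mem_eball_zero_iff, enorm_eq_nnnorm]

theorem le_radius_ofScalars_of_forall_tendsto {c : ℕ → ℂ} {R : ℝ≥0∞}
    (h : ∀ w ∈ disk R, ∃ l : ℂ,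
      Tendsto (fun m => ∑ n ∈ Finset.range m, c n * w ^ n) atTop (𝓝 l)) :
    R ≤ (ofScalars ℂ c).radius := by
  refine ENNReal.le_of_forall_nnreal_lt fun r hr => ?_
  obtain ⟨l, hl⟩ := h r (by simpa [disk] using hr)
  have hterm : Tendsto (fun n => c n * (r : ℂ) ^ n) atTop (𝓝 0) := by
    simpa [Finset.sum_range_succ_sub_sum] using (hl.comp (tendsto_add_atTop_nat 1)).sub hl
  refine (ofScalars ℂ c).le_radius_of_tendsto (l := 0) ?_
  simpa [ofScalars_norm] using hterm.norm

theorem hasAbsSumAt_mk_of_mem_eball {c : ℕ → ℂ} {w : ℂ}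
    (hw : w ∈ eball (0 : ℂ) (ofScalars ℂ c).radius) :
    (PowerSeries.mk c).HasAbsSumAt w ((ofScalars ℂ c).sum w) := by
  have hterm : ∀ n,
      ofScalars ℂ c n (fun _ => w) = PowerSeries.coeff n (PowerSeries.mk c) * w ^ n := fun n => by
    simp [mul_comm]
  simp only [PowerSeries.HasAbsSumAt, ← hterm]
  exact ⟨(ofScalars ℂ c).summable_norm_apply hw, (ofScalars ℂ c).hasSum hw⟩

theorem norm_le_div_pow_of_lt_radius {c : ℕ → ℂ} {r M : ℝ} (hr : 0 < r)
    (hrR : ENNReal.ofReal r < (ofScalars ℂ c).radius)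
    (hM : ∀ w ∈ sphere (0 : ℂ) r, ‖(ofScalars ℂ c).sum w‖ ≤ M) (n : ℕ) :
    ‖c n‖ ≤ M / r ^ n := by
  have hp := (ofScalars ℂ c).hasFPowerSeriesOnBall ((ENNReal.ofReal_pos.2 hr).trans hrR)
  have hcont : DiffContOnCl ℂ (ofScalars ℂ c).sum (ball 0 r) := by
    refine DifferentiableOn.diffContOnCl (hp.differentiableOn.mono fun w hw => ?_)
    rw [closure_ball _ hr.ne', mem_closedBall_zero_iff] at hw
    rw [mem_eball_zero_iff, ← ofReal_norm]
    exact (ENNReal.ofReal_le_ofReal hw).trans_lt hrR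
  have hderiv : iteratedDeriv n (ofScalars ℂ c).sum 0 = n.factorial * c n := by
    rw [iteratedDeriv_eq_iteratedFDeriv, ← hp.factorial_smul 1 n, ofScalars_apply_eq]
    simp
  have hcauchy := Complex.norm_iteratedDeriv_le_of_forall_mem_sphere_norm_le n hr hcont hM
  rw [hderiv, norm_mul, Complex.norm_natCast, mul_div_assoc] at hcauchy
  exact le_of_mul_le_mul_left hcauchy (by positivity)

theorem PowerSeries.HasAbsSumAt.norm_le_of_sum_mul_pow_eq_zero {𝕜 : Type*} [NormedField 𝕜]
    [CompleteSpace 𝕜] {t : ℕ} {B : ℕ → PowerSeries 𝕜} {A : PowerSeries 𝕜} {w s : 𝕜}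
    {a : ℕ → 𝕜} (hA : A.HasAbsSumAt w s) (hB : ∀ j ≤ t, (B j).HasAbsSumAt w (a j))
    (ha0 : a 0 = 1) (hrel : ∑ j ∈ Finset.range (t + 1), B j * A ^ (t - j) = 0) :
    ‖s‖ ≤ 1 + ∑ j ∈ Finset.Ico 1 (t + 1), ‖a j‖ := by
  have hsum := PowerSeries.HasAbsSumAt.sum (Finset.range (t + 1))
    fun j hj => (hB j (Finset.mem_range_succ_iff.1 hj)).mul (hA.pow (t - j))
  rw [hrel] at hsum
  exact norm_le_one_add_sum_norm_of_sum_mul_pow_eq_zero ha0 hsum.eq_zero_of_zero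

theorem FormalAlgRel.eval_eq_zero {N : ℕ} {f : ℕ → (Fin N → ℂ) → ℂ}
    {g : ℕ → ℕ → (Fin N → ℂ) → ℂ} {t : ℕ} {D₁ : Set (Fin N → ℂ)} (hrel : FormalAlgRel f g t D₁)
    {α : Fin N → ℂ} (hα : α ∈ D₁) :
    ∑ j ∈ Finset.range (t + 1),
      PowerSeries.mk (fun n => g j n α) * PowerSeries.mk (fun n => f n α) ^ (t - j) = 0 := by
  have hmk : ∀ h : ℕ → (Fin N → ℂ) → ℂ, PowerSeries.mk (fun n => h n α) =
      PowerSeries.map (Pi.evalRingHom (fun _ => ℂ) α) (PowerSeries.mk h) := fun h => by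
    ext n; simp
  ext m
  simpa [hmk, ← map_pow, ← map_mul, ← map_sum] using hrel m α hα

section HartogsSeries

variable {N : ℕ} {D₁ : Set (Fin N → ℂ)} {R : ℝ≥0∞} {f : ℕ → (Fin N → ℂ) → ℂ} {t : ℕ}
  {Φ : ℕ → (Fin N → ℂ) × ℂ → ℂ} {g : ℕ → ℕ → (Fin N → ℂ) → ℂ}

theorem norm_sum_ofScalars_le_of_formalAlgRel
    (hexp : ∀ j, j ≤ t → ∀ p ∈ D₁ ×ˢ disk R,
      Tendsto (fun m => ∑ n ∈ Finset.range m, g j n p.1 * p.2 ^ n) atTop (𝓝 (Φ j p)))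
    (hΦ0 : ∀ p ∈ D₁ ×ˢ disk R, Φ 0 p = 1) (hrel : FormalAlgRel f g t D₁)
    {α : Fin N → ℂ} (hα : α ∈ D₁) (hconv : ∀ w ∈ disk R, ∃ l : ℂ,
      Tendsto (fun m => ∑ n ∈ Finset.range m, f n α * w ^ n) atTop (𝓝 l))
    {w : ℂ} (hw : w ∈ disk R) :
    ‖(ofScalars ℂ (f · α)).sum w‖ ≤ 1 + ∑ j ∈ Finset.Ico 1 (t + 1), ‖Φ j (α, w)‖ := by
  have hmem : ∀ c : ℕ → ℂ, R ≤ (ofScalars ℂ c).radius → w ∈ eball 0 (ofScalars ℂ c).radius :=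
    fun c hc => eball_subset_eball hc (disk_eq_eball R ▸ hw)
  have hF := hasAbsSumAt_mk_of_mem_eball (hmem _ (le_radius_ofScalars_of_forall_tendsto hconv))
  have hG : ∀ j ≤ t, (PowerSeries.mk (g j · α)).HasAbsSumAt w (Φ j (α, w)) := by
    intro j hj
    have hradius : R ≤ (ofScalars ℂ (g j · α)).radius :=
      le_radius_ofScalars_of_forall_tendsto fun w' hw' => ⟨_, hexp j hj (α, w') ⟨hα, hw'⟩⟩
    have hsum := hasAbsSumAt_mk_of_mem_eball (hmem _ hradius)
    have hlim : Tendsto (fun m => ∑ n ∈ Finset.range m, g j n α * w ^ n) atTop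
        (𝓝 ((ofScalars ℂ (g j · α)).sum w)) := by
      simpa only [PowerSeries.coeff_mk] using hsum.2.tendsto_sum_nat
    rwa [tendsto_nhds_unique (hexp j hj (α, w) ⟨hα, hw⟩) hlim]
  exact hF.norm_le_of_sum_mul_pow_eq_zero hG (hΦ0 _ ⟨hα, hw⟩) (hrel.eval_eq_zero hα)

theorem exists_forall_norm_le_div_pow_of_formalAlgRel (hD₁open : IsOpen D₁)
    (hf : ∀ n, DifferentiableOn ℂ (f n) D₁) (hC1 : CondC1 f D₁ R)
    (hΦ : ∀ j, j ≤ t → DifferentiableOn ℂ (Φ j) (D₁ ×ˢ disk R))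
    (hexp : ∀ j, j ≤ t → ∀ p ∈ D₁ ×ˢ disk R,
      Tendsto (fun m => ∑ n ∈ Finset.range m, g j n p.1 * p.2 ^ n) atTop (𝓝 (Φ j p)))
    (hΦ0 : ∀ p ∈ D₁ ×ˢ disk R, Φ 0 p = 1) (hrel : FormalAlgRel f g t D₁)
    {z₀ : Fin N → ℂ} (hz₀ : z₀ ∈ D₁) {r : ℝ} (hr : 0 < r) (hrR : ENNReal.ofReal r < R) :
    ∃ ε > 0, ∃ M : ℝ, ∀ z ∈ ball z₀ ε, ∀ n, ‖f n z‖ ≤ M / r ^ n := by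
  obtain ⟨S, hSD, hDS, hconv⟩ := hC1
  obtain ⟨ε, hε, hεD⟩ := nhds_basis_closedBall.mem_iff.1 (hD₁open.mem_nhds hz₀)
  have hsphere : ∀ w ∈ sphere (0 : ℂ) r, w ∈ disk R := fun w hw => by
    rwa [disk_eq_eball, mem_eball_zero_iff, ← ofReal_norm, mem_sphere_zero_iff_norm.1 hw]
  -- the coefficients `Φⱼ` with `j ≥ 1` bound the roots of the monic relation
  obtain ⟨C, hC⟩ := ((isCompact_closedBall z₀ ε).prod (isCompact_sphere (0 : ℂ) r))
    |>.exists_bound_of_continuousOn (f := fun p => ∑ j ∈ Finset.Ico 1 (t + 1), ‖Φ j p‖)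
      (continuousOn_finsetSum _ fun j hj => ((hΦ j (by simp at hj; omega)).continuousOn.mono
        (Set.prod_mono hεD hsphere)).norm)
  have hS : ∀ α ∈ S ∩ ball z₀ ε, ∀ n, f n α ∈ closedBall 0 ((1 + C) / r ^ n) := by
    rintro α ⟨hαS, hαε⟩ n
    rw [mem_closedBall_zero_iff]
    refine norm_le_div_pow_of_lt_radius (c := (f · α)) hr ?_ (fun w hw => ?_) n
    · exact hrR.trans_le (le_radius_ofScalars_of_forall_tendsto (hconv α hαS))
    · refine (norm_sum_ofScalars_le_of_formalAlgRel hexp hΦ0 hrel (hSD hαS) (hconv α hαS)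
        (hsphere w hw)).trans (add_le_add_right ?_ 1)
      exact (le_abs_self _).trans (hC (α, w) ⟨ball_subset_closedBall hαε, hw⟩)
  refine ⟨ε, hε, 1 + C, fun z hz n => mem_closedBall_zero_iff.1 ?_⟩
  have hcl : ball z₀ ε ⊆ closure (S ∩ ball z₀ ε) := fun z hz => by
    simpa [Set.inter_comm] using isOpen_ball.inter_closure
      ⟨hz, hDS (hεD (ball_subset_closedBall hz))⟩
  have hclD : closure (S ∩ ball z₀ ε) ⊆ D₁ :=
    (closure_mono Set.inter_subset_right).trans (closure_ball_subset_closedBall.trans hεD)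
  simpa using (Set.MapsTo.closure_of_continuousOn (fun α hα => hS α hα n)
    ((hf n).continuousOn.mono hclD)) (hcl hz)

theorem holSumOn_of_forall_norm_le_div_pow (hD₁open : IsOpen D₁)
    (hf : ∀ n, DifferentiableOn ℂ (f n) D₁)
    (hbound : ∀ z₀ ∈ D₁, ∀ r : ℝ, 0 < r → ENNReal.ofReal r < R →
      ∃ ε > 0, ∃ M : ℝ, ∀ z ∈ ball z₀ ε, ∀ n, ‖f n z‖ ≤ M / r ^ n) :
    HolSumOn f (D₁ ×ˢ disk R) := by
  set G : (Fin N → ℂ) × ℂ → ℂ := fun p => ∑' n, f n p.1 * p.2 ^ n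
  suffices h : ∀ p ∈ D₁ ×ˢ disk R,
      DifferentiableAt ℂ G p ∧ Summable fun n => f n p.1 * p.2 ^ n from
    ⟨G, fun p hp => (h p hp).1.differentiableWithinAt,
      fun p hp => (h p hp).2.hasSum.tendsto_sum_nat⟩
  rintro ⟨z, w⟩ ⟨hz, hw⟩
  rw [disk_eq_eball, mem_eball_zero_iff, ← ofReal_norm] at hw
  obtain ⟨r, -, hwr, hrR⟩ := ENNReal.lt_iff_exists_real_btwn.1 hw
  rw [ENNReal.ofReal_lt_ofReal_iff_of_nonneg (norm_nonneg w)] at hwr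
  obtain ⟨r', hwr', hr'r⟩ := exists_between hwr
  have hr' : 0 < r' := (norm_nonneg w).trans_lt hwr'
  obtain ⟨ε, hε, M, hM⟩ := hbound z hz r (hr'.trans hr'r) hrR
  obtain ⟨δ, hδ, hδD⟩ := Metric.isOpen_iff.1 hD₁open z hz
  set V := ball z (min ε δ) ×ˢ ball (0 : ℂ) r'
  have hpV : (z, w) ∈ V := ⟨mem_ball_self (lt_min hε hδ), mem_ball_zero_iff.2 hwr'⟩
  have hVD : ∀ q ∈ V, q.1 ∈ D₁ := fun q hq => hδD (ball_subset_ball (min_le_right _ _) hq.1)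
  have hdiff : ∀ n, DifferentiableOn ℂ (fun q : (Fin N → ℂ) × ℂ => f n q.1 * q.2 ^ n) V :=
    fun n => ((hf n).comp differentiableOn_fst hVD).mul (differentiableOn_snd.pow n)
  have hle : ∀ n, ∀ q ∈ V, ‖f n q.1 * q.2 ^ n‖ ≤ M * (r' / r) ^ n := by
    intro n q hq
    have hfq := hM q.1 (ball_subset_ball (min_le_left _ _) hq.1) n
    calc ‖f n q.1 * q.2 ^ n‖ = ‖f n q.1‖ * ‖q.2‖ ^ n := by rw [norm_mul, norm_pow]
      _ ≤ M / r ^ n * r' ^ n := by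
        gcongr
        · exact (norm_nonneg _).trans hfq
        · exact (mem_ball_zero_iff.1 hq.2).le
      _ = M * (r' / r) ^ n := by rw [div_pow]; ring
  have hr : 0 < r := hr'.trans hr'r
  have hu : Summable fun n => M * (r' / r) ^ n :=
    (summable_geometric_of_lt_one (by positivity) ((div_lt_one hr).2 hr'r)).mul_left M
  exact ⟨(differentiableOn_tsum_of_norm_le hu (isOpen_ball.prod isOpen_ball) hdiff hle)
      |>.differentiableAt ((isOpen_ball.prod isOpen_ball).mem_nhds hpV),
    hu.of_norm_bounded fun n => hle n _ hpV⟩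

theorem HolSumOn.mono {V W : Set ((Fin N → ℂ) × ℂ)} (h : HolSumOn f V) (hWV : W ⊆ V) :
    HolSumOn f W :=
  let ⟨G, hG, hsum⟩ := h
  ⟨G, hG.mono hWV, fun p hp => hsum p (hWV hp)⟩

end HartogsSeries

theorem hartogs_series_holomorphic_off_degenerate_discriminant_general
    (N : ℕ)
    (D₁ : Set (Fin N → ℂ)) (hD₁open : IsOpen D₁)
    (R : ℝ≥0∞)
    (f : ℕ → (Fin N → ℂ) → ℂ) (hf : ∀ n, DifferentiableOn ℂ (f n) D₁)
    (hC1 : CondC1 f D₁ R)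
    -- condition (C2) with a monic relation: `Φ₀ ≡ 1` and `t ≥ 2`:
    (t : ℕ)
    (Φ : ℕ → (Fin N → ℂ) × ℂ → ℂ) (g : ℕ → ℕ → (Fin N → ℂ) → ℂ)
    (hΦ : ∀ j, j ≤ t → DifferentiableOn ℂ (Φ j) (D₁ ×ˢ disk R))
    (hexp : ∀ j, j ≤ t → ∀ p ∈ D₁ ×ˢ disk R,
      Tendsto (fun m => ∑ n ∈ Finset.range m, g j n p.1 * p.2 ^ n) atTop (𝓝 (Φ j p)))
    (hΦ0 : ∀ p ∈ D₁ ×ˢ disk R, Φ 0 p = 1)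
    (hrel : FormalAlgRel f g t D₁)
    (Δ : (Fin N → ℂ) × ℂ → ℂ) :
    HolSumOn f ((D₁ \ {β ∈ D₁ | ∀ w ∈ disk R, Δ (β, w) = 0}) ×ˢ disk R) := by
  have hbound : ∀ z₀ ∈ D₁, ∀ r : ℝ, 0 < r → ENNReal.ofReal r < R →
      ∃ ε > 0, ∃ M : ℝ, ∀ z ∈ ball z₀ ε, ∀ n, ‖f n z‖ ≤ M / r ^ n :=
    fun z₀ hz₀ r hr hrR =>
      exists_forall_norm_le_div_pow_of_formalAlgRel hD₁open hf hC1 hΦ hexp hΦ0 hrel hz₀ hr hrR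
  exact (holSumOn_of_forall_norm_le_div_pow hD₁open hf hbound).mono
    (Set.prod_mono Set.sdiff_subset subset_rfl)

/-- **Step 4 lemma.** Suppose `F` satisfies (C1) and a monic algebraic relation (`Φ₀ ≡ 1`,
`t ≥ 2`). Let `Δ` be a holomorphic function on `D`, not identically zero, vanishing exactly
where the polynomial `∑ Φⱼ(z,w) X^{t-j}` has a repeated complex root, and let
`E_Δ = {β ∈ D₁ | Δ(β,·) ≡ 0 on D₂}`. Then `F` converges and is holomorphic on
`(D₁ \ E_Δ) × D₂`. -/
theorem hartogs_series_holomorphic_off_degenerate_discriminant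
    (N : ℕ) (hN : 1 ≤ N)
    (D₁ : Set (Fin N → ℂ)) (hD₁open : IsOpen D₁) (hD₁conn : IsConnected D₁)
    (R : ℝ≥0∞) (hR : 0 < R)
    (f : ℕ → (Fin N → ℂ) → ℂ) (hf : ∀ n, DifferentiableOn ℂ (f n) D₁)
    (hC1 : CondC1 f D₁ R)
    -- condition (C2) with a monic relation: `Φ₀ ≡ 1` and `t ≥ 2`:
    (t : ℕ) (ht : 2 ≤ t)
    (Φ : ℕ → (Fin N → ℂ) × ℂ → ℂ) (g : ℕ → ℕ → (Fin N → ℂ) → ℂ)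
    (hΦ : ∀ j, j ≤ t → DifferentiableOn ℂ (Φ j) (D₁ ×ˢ disk R))
    (hg : ∀ j n, j ≤ t → DifferentiableOn ℂ (g j n) D₁)
    (hexp : ∀ j, j ≤ t → ∀ p ∈ D₁ ×ˢ disk R,
      Tendsto (fun m => ∑ n ∈ Finset.range m, g j n p.1 * p.2 ^ n) atTop (𝓝 (Φ j p)))
    (hΦ0 : ∀ p ∈ D₁ ×ˢ disk R, Φ 0 p = 1)
    (hg00 : ∀ z ∈ D₁, g 0 0 z = 1)
    (hg0n : ∀ n, 1 ≤ n → ∀ z ∈ D₁, g 0 n z = 0)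
    (hrel : FormalAlgRel f g t D₁)
    -- `Δ` is not identically zero and vanishes exactly where there is a repeated root:
    (Δ : (Fin N → ℂ) × ℂ → ℂ) (hΔ : DifferentiableOn ℂ Δ (D₁ ×ˢ disk R))
    (hΔne : ∃ p ∈ D₁ ×ˢ disk R, Δ p ≠ 0)
    (hΔzero : ∀ p ∈ D₁ ×ˢ disk R, (Δ p = 0 ↔ ∃ x : ℂ, (Polynomial.X - Polynomial.C x) ^ 2 ∣
      ∑ j ∈ Finset.range (t + 1), Polynomial.C (Φ j p) * Polynomial.X ^ (t - j))) :
    HolSumOn f ((D₁ \ {β ∈ D₁ | ∀ w ∈ disk R, Δ (β, w) = 0}) ×ˢ disk R) :=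
  hartogs_series_holomorphic_off_degenerate_discriminant_general N D₁ hD₁open R f hf hC1 t Φ g hΦ
    hexp hΦ0 hrel Δ
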